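/- Let S be a topological Schottky set in S², with {D_i}_{i∈I} the connected components of S² \ S, and let Ω be a nonempty open connected subset of S² such that for each i ∈ I the set ∂D_i ∩ Ω is connected (where ∂D_i denotes the topological frontier of D_i in S²). Then S ∩ Ω is connected. -/
import Mathlib


noncomputable section

open Filter Topology

/-- The 2-sphere: the unit sphere in `ℝ³`. -/
abbrev Sphere2 : Type := ↥(Metric.sphere (0 : EuclideanSpace ℝ (Fin 3)) 1)

/-- The set of connected components of the complement of `S` in the 2-sphere. -/
def complComponents (S : Set Sphere2) : Set (Set Sphere2) :=
  {D | ∃ x ∈ Sᶜ, D = connectedComponentIn Sᶜ x}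

/-- `D` is a Jordan domain: there is a homeomorphism from the closed unit disc in `ℝ²`
onto `closure D` carrying the open unit disc onto `D`. -/
def IsOpenDiscComponent (D : Set Sphere2) : Prop :=
  ∃ f : (Metric.closedBall (0 : EuclideanSpace ℝ (Fin 2)) 1 : Set (EuclideanSpace ℝ (Fin 2))) ≃ₜ
      (closure D : Set Sphere2),
    (fun y : (closure D : Set Sphere2) => (y : Sphere2)) ''
        (⇑f '' {x | (x : EuclideanSpace ℝ (Fin 2)) ∈ Metric.ball (0 : EuclideanSpace ℝ (Fin 2)) 1})
      = D

/-- A topological Schottky set: a compact proper subset of the 2-sphere satisfying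
(S1)–(S5). -/
structure IsTopSchottky (S : Set Sphere2) : Prop where
  isCompact : IsCompact S
  ne_univ : S ≠ Set.univ
  /-- (S1) countably many complementary components -/
  countable : (complComponents S).Countable
  /-- (S1) at least one complementary component -/
  compNonempty : (complComponents S).Nonempty
  /-- (S2) each complementary component is a Jordan domain -/
  disc : ∀ D ∈ complComponents S, IsOpenDiscComponent D
  /-- (S3) closures of two distinct components meet in at most one point -/
  inter_subsingleton : ∀ D ∈ complComponents S, ∀ E ∈ complComponents S, D ≠ E →
    (closure D ∩ closure E).Subsingleton
  /-- (S4) closures of three pairwise distinct components have empty intersection -/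
  triple_inter : ∀ D ∈ complComponents S, ∀ E ∈ complComponents S, ∀ F ∈ complComponents S,
    D ≠ E → D ≠ F → E ≠ F → closure D ∩ closure E ∩ closure F = ∅
  /-- (S5) for every `ε > 0` at most finitely many components have diameter at least `ε` -/
  null : ∀ ε : ℝ, 0 < ε → {D ∈ complComponents S | ε ≤ Metric.diam D}.Finite

instance : LocallyConnectedSpace Sphere2 :=
  ChartedSpace.locallyConnectedSpace (EuclideanSpace ℝ (Fin 2)) Sphere2

instance : ConnectedSpace Sphere2 := by
  have h : IsConnected (Metric.sphere (0 : EuclideanSpace ℝ (Fin 3)) 1) := by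
    apply isConnected_sphere ?_ 0 zero_le_one
    rw [← Module.finrank_eq_rank, finrank_euclideanSpace_fin]
    norm_num
  exact Subtype.connectedSpace h

namespace SchottkyAux

variable {S : Set Sphere2}

lemma comps_subset {D : Set Sphere2} (hD : D ∈ complComponents S) : D ⊆ Sᶜ := by
  obtain ⟨x, _, rfl⟩ := hD
  exact connectedComponentIn_subset _ _

lemma comps_isOpen (hScl : IsClosed S) {D : Set Sphere2} (hD : D ∈ complComponents S) :
    IsOpen D := by
  obtain ⟨x, _, rfl⟩ := hD
  exact hScl.isOpen_compl.connectedComponentIn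

lemma comps_disjoint {D E : Set Sphere2} (hD : D ∈ complComponents S)
    (hE : E ∈ complComponents S) (hne : D ≠ E) : Disjoint D E := by
  obtain ⟨x, _, rfl⟩ := hD
  obtain ⟨y, _, rfl⟩ := hE
  rw [Set.disjoint_left]
  intro z hzD hzE
  exact hne ((connectedComponentIn_eq hzD).trans (connectedComponentIn_eq hzE).symm)

lemma frontier_comps_subset (hScl : IsClosed S) {D : Set Sphere2}
    (hD : D ∈ complComponents S) : frontier D ⊆ S := by
  intro y hy
  by_contra hyS
  obtain ⟨x, hx, rfl⟩ := hD
  have hnhds : connectedComponentIn Sᶜ y ∈ 𝓝 y :=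
    connectedComponentIn_mem_nhds (hScl.isOpen_compl.mem_nhds hyS)
  have hycl : y ∈ closure (connectedComponentIn Sᶜ x) := hy.1
  obtain ⟨z, hz1, hz2⟩ := mem_closure_iff_nhds.1 hycl _ hnhds
  have h1 : connectedComponentIn Sᶜ y = connectedComponentIn Sᶜ z := connectedComponentIn_eq hz1
  have h2 : connectedComponentIn Sᶜ x = connectedComponentIn Sᶜ z := connectedComponentIn_eq hz2
  have hyD : y ∈ connectedComponentIn Sᶜ x := by
    rw [h2, ← h1]
    exact mem_connectedComponentIn hyS
  have hop : IsOpen (connectedComponentIn Sᶜ x) := hScl.isOpen_compl.connectedComponentIn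
  rw [hop.frontier_eq] at hy
  exact hy.2 hyD

lemma frontier_comps_nonempty (hScl : IsClosed S) (hSne : S.Nonempty) {D : Set Sphere2}
    (hD : D ∈ complComponents S) : (frontier D).Nonempty := by
  by_contra h
  rw [Set.not_nonempty_iff_eq_empty] at h
  obtain ⟨x, hx, rfl⟩ := hD
  have hclopen : IsClopen (connectedComponentIn Sᶜ x) := isClopen_iff_frontier_eq_empty.2 h
  rcases isClopen_iff.mp hclopen with h0 | h1
  · have := mem_connectedComponentIn hx
    rw [h0] at this
    exact this
  · obtain ⟨s, hs⟩ := hSne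
    have hsub := connectedComponentIn_subset Sᶜ x
    rw [h1] at hsub
    exact hsub (Set.mem_univ s) hs

/-- Key lemma: if `x ∈ S ∩ Ω` is in the closure of the union of (the `Ω`-parts of) a family
of complementary components whose frontiers inside `Ω` are contained in the closed set `Ct`,
then `x ∈ Ct`. -/
lemma key (hScl : IsClosed S)
    (hnull : ∀ ε : ℝ, 0 < ε → {D ∈ complComponents S | ε ≤ Metric.diam D}.Finite)
    {Ω : Set Sphere2} (hopen : IsOpen Ω) {Ct : Set Sphere2} (hCt : IsClosed Ct)
    {𝒟 : Set (Set Sphere2)} (h𝒟 : 𝒟 ⊆ complComponents S)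
    (hfr : ∀ D ∈ 𝒟, frontier D ∩ Ω ⊆ Ct)
    {x : Sphere2} (hxS : x ∈ S) (hxΩ : x ∈ Ω)
    (hxc : x ∈ closure (⋃ D ∈ 𝒟, D ∩ Ω)) : x ∈ Ct := by
  by_cases hcase : ∃ D ∈ 𝒟, x ∈ closure (D ∩ Ω)
  · obtain ⟨D, hD𝒟, hxcl⟩ := hcase
    have hDopen : IsOpen D := comps_isOpen hScl (h𝒟 hD𝒟)
    have hxclD : x ∈ closure D := closure_mono Set.inter_subset_left hxcl
    have hxD : x ∉ D := fun h => (comps_subset (h𝒟 hD𝒟) h) hxS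
    have hxf : x ∈ frontier D := by
      rw [hDopen.frontier_eq]
      exact ⟨hxclD, hxD⟩
    exact hfr D hD𝒟 ⟨hxf, hxΩ⟩
  · push_neg at hcase
    rw [← hCt.closure_eq]
    rw [Metric.mem_closure_iff]
    intro ε hε
    obtain ⟨ε0, hε0pos, hball⟩ := Metric.isOpen_iff.1 hopen x hxΩ
    set δ1 : ℝ := min ε ε0 / 3 with hδ1def
    have hδ1pos : 0 < δ1 := by positivity
    -- big components
    have hF : {D ∈ complComponents S | δ1 ≤ Metric.diam D}.Finite := hnull δ1 hδ1pos
    set K : Set Sphere2 :=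
      ⋃ D ∈ {D ∈ complComponents S | δ1 ≤ Metric.diam D} ∩ 𝒟, closure (D ∩ Ω) with hKdef
    have hKclosed : IsClosed K :=
      (hF.inter_of_left 𝒟).isClosed_biUnion (fun D _ => isClosed_closure)
    have hxK : x ∉ K := by
      intro hxK
      rw [hKdef, Set.mem_iUnion₂] at hxK
      obtain ⟨D, hDmem, hxD⟩ := hxK
      exact hcase D hDmem.2 hxD
    obtain ⟨δ2, hδ2pos, hball2⟩ := Metric.isOpen_iff.1 hKclosed.isOpen_compl x hxK
    set δ : ℝ := min δ1 δ2 with hδdef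
    have hδpos : 0 < δ := lt_min hδ1pos hδ2pos
    obtain ⟨z, hzT, hzball⟩ := Metric.mem_closure_iff.1 hxc δ hδpos
    rw [Set.mem_iUnion₂] at hzT
    obtain ⟨D', hD'𝒟, hzD', hzΩ⟩ := hzT
    -- D' is small
    have hD'small : Metric.diam D' < δ1 := by
      by_contra hbig
      push_neg at hbig
      have hzK : z ∈ K := by
        rw [hKdef, Set.mem_iUnion₂]
        exact ⟨D', ⟨⟨h𝒟 hD'𝒟, hbig⟩, hD'𝒟⟩, subset_closure ⟨hzD', hzΩ⟩⟩
      have : z ∈ Kᶜ := hball2 (by rw [Metric.mem_ball, dist_comm]; exact lt_of_lt_of_le hzball (min_le_right _ _))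
      exact this hzK
    -- pick a frontier point of D'
    obtain ⟨y, hy⟩ := frontier_comps_nonempty hScl ⟨x, hxS⟩ (h𝒟 hD'𝒟)
    have hyclD' : y ∈ closure D' := hy.1
    have hbdd : Bornology.IsBounded (closure D') := (isClosed_closure.isCompact).isBounded
    have hdyz : dist y z ≤ Metric.diam D' := by
      rw [← Metric.diam_closure]
      exact Metric.dist_le_diam_of_mem hbdd hyclD' (subset_closure hzD')
    have hdxy : dist x y < min ε ε0 := by
      calc dist x y ≤ dist x z + dist z y := dist_triangle _ _ _
        _ < δ + δ1 := by
            rw [dist_comm z y]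
            exact add_lt_add_of_lt_of_le hzball (le_of_lt (lt_of_le_of_lt hdyz hD'small))
        _ ≤ δ1 + δ1 := by
            have := min_le_left δ1 δ2
            linarith
        _ < min ε ε0 := by
            rw [hδ1def]
            have : 0 < min ε ε0 := lt_min hε hε0pos
            linarith
    have hyΩ : y ∈ Ω := hball (by
      rw [Metric.mem_ball, dist_comm]
      exact lt_of_lt_of_le hdxy (min_le_right _ _))
    have hyCt : y ∈ Ct := hfr D' hD'𝒟 ⟨hy, hyΩ⟩
    exact ⟨y, hyCt, lt_of_lt_of_le hdxy (min_le_left _ _)⟩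

end SchottkyAux

open SchottkyAux in
/-- If `Ω` is a nonempty open connected subset of the sphere meeting the frontier of every
complementary component of the Schottky set `S` in a connected set, then `S ∩ Ω` is
connected. -/
theorem schottky_inter_open_connected (S : Set Sphere2) (hS : IsTopSchottky S)
    (Ω : Set Sphere2) (hne : Ω.Nonempty) (hopen : IsOpen Ω) (hconn : IsPreconnected Ω)
    (hfr : ∀ D ∈ complComponents S, IsPreconnected (frontier D ∩ Ω)) :
    IsPreconnected (S ∩ Ω) := by
  have hScl : IsClosed S := hS.isCompact.isClosed
  rw [isPreconnected_closed_iff]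
  intro C1 C2 hC1 hC2 hcover hA hB
  by_contra hAB
  rw [Set.not_nonempty_iff_eq_empty] at hAB
  set A : Set Sphere2 := S ∩ Ω ∩ C1 with hAdef
  set B : Set Sphere2 := S ∩ Ω ∩ C2 with hBdef
  -- each frontier-in-Ω lies entirely in C1 or entirely in C2
  have hsplit : ∀ D ∈ complComponents S, frontier D ∩ Ω ⊆ C1 ∨ frontier D ∩ Ω ⊆ C2 := by
    intro D hD
    have hsub : frontier D ∩ Ω ⊆ C1 ∪ C2 := fun y hy =>
      hcover ⟨frontier_comps_subset hScl hD hy.1, hy.2⟩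
    by_contra h
    push_neg at h
    obtain ⟨h1, h2⟩ := h
    have hne1 : ((frontier D ∩ Ω) ∩ C1).Nonempty := by
      obtain ⟨y, hy, hyn⟩ := Set.not_subset.1 h2
      rcases hsub hy with h | h
      · exact ⟨y, hy, h⟩
      · exact absurd h hyn
    have hne2 : ((frontier D ∩ Ω) ∩ C2).Nonempty := by
      obtain ⟨y, hy, hyn⟩ := Set.not_subset.1 h1
      rcases hsub hy with h | h
      · exact absurd h hyn
      · exact ⟨y, hy, h⟩
    obtain ⟨y, hy, hy12⟩ :=
      isPreconnected_closed_iff.1 (hfr D hD) C1 C2 hC1 hC2 hsub hne1 hne2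
    have : y ∈ S ∩ Ω ∩ (C1 ∩ C2) :=
      ⟨⟨frontier_comps_subset hScl hD hy.1, hy.2⟩, hy12⟩
    rw [hAB] at this
    exact this
  set 𝒰c : Set (Set Sphere2) := {D ∈ complComponents S | frontier D ∩ Ω ⊆ C1} with h𝒰cdef
  set 𝒱c : Set (Set Sphere2) := {D ∈ complComponents S | ¬ frontier D ∩ Ω ⊆ C1} with h𝒱cdef
  set U : Set Sphere2 := A ∪ ⋃ D ∈ 𝒰c, D ∩ Ω with hUdef
  set V : Set Sphere2 := B ∪ ⋃ D ∈ 𝒱c, D ∩ Ω with hVdef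
  have hUfr : ∀ D ∈ 𝒰c, frontier D ∩ Ω ⊆ C1 := fun D hD => hD.2
  have hVfr : ∀ D ∈ 𝒱c, frontier D ∩ Ω ⊆ C2 := by
    intro D hD
    rcases hsplit D hD.1 with h | h
    · exact absurd h hD.2
    · exact h
  -- U and V cover Ω
  have hcov : Ω ⊆ U ∪ V := by
    intro w hw
    by_cases hwS : w ∈ S
    · rcases hcover ⟨hwS, hw⟩ with h | h
      · exact Or.inl (Or.inl ⟨⟨hwS, hw⟩, h⟩)
      · exact Or.inr (Or.inl ⟨⟨hwS, hw⟩, h⟩)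
    · have hD : connectedComponentIn Sᶜ w ∈ complComponents S := ⟨w, hwS, rfl⟩
      have hwD : w ∈ connectedComponentIn Sᶜ w := mem_connectedComponentIn hwS
      by_cases hfrw : frontier (connectedComponentIn Sᶜ w) ∩ Ω ⊆ C1
      · exact Or.inl (Or.inr (Set.mem_biUnion ⟨hD, hfrw⟩ ⟨hwD, hw⟩))
      · exact Or.inr (Or.inr (Set.mem_biUnion ⟨hD, hfrw⟩ ⟨hwD, hw⟩))
  -- U and V are disjoint
  have hdisj : U ∩ V = ∅ := by
    rw [Set.eq_empty_iff_forall_notMem]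
    rintro w ⟨hwU, hwV⟩
    rcases hwU with hwA | hwU'
    · rcases hwV with hwB | hwV'
      · have : w ∈ S ∩ Ω ∩ (C1 ∩ C2) := ⟨hwA.1, hwA.2, hwB.2⟩
        rw [hAB] at this
        exact this
      · rw [Set.mem_iUnion₂] at hwV'
        obtain ⟨D, hD, hwD, _⟩ := hwV'
        exact comps_subset hD.1 hwD hwA.1.1
    · rw [Set.mem_iUnion₂] at hwU'
      obtain ⟨D, hD, hwD, _⟩ := hwU'
      rcases hwV with hwB | hwV'
      · exact comps_subset hD.1 hwD hwB.1.1
      · rw [Set.mem_iUnion₂] at hwV'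
        obtain ⟨D', hD', hwD', _⟩ := hwV'
        have hne' : D ≠ D' := by
          rintro rfl
          exact hD'.2 hD.2
        exact Set.disjoint_left.1 (comps_disjoint hD.1 hD'.1 hne') hwD hwD'
  -- V is closed in Ω
  have hVclosed : ∀ w ∈ Ω, w ∈ closure V → w ∈ V := by
    intro w hwΩ hwcl
    by_contra hwV
    have hwU : w ∈ U := (hcov hwΩ).resolve_right hwV
    rcases hwU with hwA | hwU'
    · -- w ∈ A, a limit of V
      rw [hVdef, closure_union] at hwcl
      rcases hwcl with hwB | hwT
      · have hwB' : w ∈ S ∩ C2 := by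
          have : closure B ⊆ S ∩ C2 := by
            rw [show S ∩ C2 = closure (S ∩ C2) from ((hScl.inter hC2).closure_eq).symm]
            exact closure_mono (fun y hy => ⟨hy.1.1, hy.2⟩)
          exact this hwB
        have : w ∈ S ∩ Ω ∩ (C1 ∩ C2) := ⟨⟨hwB'.1, hwΩ⟩, hwA.2, hwB'.2⟩
        rw [hAB] at this
        exact this
      · have hwC2 : w ∈ C2 :=
          key hScl hS.null hopen hC2 (fun D hD => hD.1) hVfr hwA.1.1 hwΩ hwT
        have : w ∈ S ∩ Ω ∩ (C1 ∩ C2) := ⟨hwA.1, hwA.2, hwC2⟩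
        rw [hAB] at this
        exact this
    · -- w in a 𝒰c component: open neighborhood avoiding V
      rw [Set.mem_iUnion₂] at hwU'
      obtain ⟨D, hD, hwD, hwΩ'⟩ := hwU'
      have hop : IsOpen (D ∩ Ω) := (comps_isOpen hScl hD.1).inter hopen
      obtain ⟨z, ⟨hzD, hzΩ⟩, hzV⟩ :=
        mem_closure_iff.1 hwcl (D ∩ Ω) hop ⟨hwD, hwΩ'⟩
      have hzU : z ∈ U := Or.inr (Set.mem_biUnion hD ⟨hzD, hzΩ⟩)
      have : z ∈ U ∩ V := ⟨hzU, hzV⟩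
      rw [hdisj] at this
      exact this
  -- U is closed in Ω
  have hUclosed : ∀ w ∈ Ω, w ∈ closure U → w ∈ U := by
    intro w hwΩ hwcl
    by_contra hwU
    have hwV : w ∈ V := (hcov hwΩ).resolve_left hwU
    rcases hwV with hwB | hwV'
    · rw [hUdef, closure_union] at hwcl
      rcases hwcl with hwA | hwT
      · have hwA' : w ∈ S ∩ C1 := by
          have : closure A ⊆ S ∩ C1 := by
            rw [show S ∩ C1 = closure (S ∩ C1) from ((hScl.inter hC1).closure_eq).symm]
            exact closure_mono (fun y hy => ⟨hy.1.1, hy.2⟩)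
          exact this hwA
        have : w ∈ S ∩ Ω ∩ (C1 ∩ C2) := ⟨⟨hwA'.1, hwΩ⟩, hwA'.2, hwB.2⟩
        rw [hAB] at this
        exact this
      · have hwC1 : w ∈ C1 :=
          key hScl hS.null hopen hC1 (fun D hD => hD.1) hUfr hwB.1.1 hwΩ hwT
        have : w ∈ S ∩ Ω ∩ (C1 ∩ C2) := ⟨⟨hwB.1.1, hwΩ⟩, hwC1, hwB.2⟩
        rw [hAB] at this
        exact this
    · rw [Set.mem_iUnion₂] at hwV'
      obtain ⟨D, hD, hwD, hwΩ'⟩ := hwV'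
      have hop : IsOpen (D ∩ Ω) := (comps_isOpen hScl hD.1).inter hopen
      obtain ⟨z, ⟨hzD, hzΩ⟩, hzU⟩ :=
        mem_closure_iff.1 hwcl (D ∩ Ω) hop ⟨hwD, hwΩ'⟩
      have hzV : z ∈ V := Or.inr (Set.mem_biUnion hD ⟨hzD, hzΩ⟩)
      have : z ∈ U ∩ V := ⟨hzU, hzV⟩
      rw [hdisj] at this
      exact this
  -- conclude, using preconnectedness of Ω
  obtain ⟨a, haA⟩ := hA
  obtain ⟨b, hbB⟩ := hB
  have hcov' : Ω ⊆ closure U ∪ closure V :=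
    fun w hw => (hcov hw).imp (fun h => subset_closure h) (fun h => subset_closure h)
  have hUne : (Ω ∩ closure U).Nonempty := ⟨a, haA.1.2, subset_closure (Or.inl haA)⟩
  have hVne : (Ω ∩ closure V).Nonempty := ⟨b, hbB.1.2, subset_closure (Or.inl hbB)⟩
  obtain ⟨z, hzΩ, hzU, hzV⟩ :=
    isPreconnected_closed_iff.1 hconn (closure U) (closure V)
      isClosed_closure isClosed_closure hcov' hUne hVne
  have : z ∈ U ∩ V := ⟨hUclosed z hzΩ hzU, hVclosed z hzΩ hzV⟩
  rw [hdisj] at this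
  exact this
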